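/- arXiv:0811.1015 — 3 statements merged into one kernel-verified Lean document; each statement's English description precedes it below -/
import Mathlib

section
/- The matrix Φ_n² with entries Φ_n²(m,k) = C(n-m,k)/C(n,k) is invertible with inverse [Φ_n²]^{-1}(i,j) = (-1)^{i+j-n} C(i,n-j) C(n,i), i.e., ∑_{k=0}^{n} [C(n-m,k)/C(n,k)] · (-1)^{k+j-n} C(k,n-j) C(n,k) = δ_{m,j} for all 0 ≤ m,j ≤ n. -/
/-!
Cancelling `C(n, k)`, the sum becomes `(-1)^(n-j)` times the `(n-m, n-j)` entry of the product of
the binomial matrix `(C(a, k))` with its signed version `((-1)^k C(k, b))`. That product is the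
diagonal matrix `((-1)^b δ_{a,b})`: the identity `C(a, k) C(k, b) = C(a, b) C(a-b, k-b)` turns
each entry into `C(a, b)` times an alternating row sum `∑ (-1)^i C(a-b, i)`, which vanishes
unless `a = b`.
-/

open Finset

namespace Int

theorem alternating_sum_range_choose_mul_choose (a b : ℕ) :
    ∑ k ∈ Finset.range (a + 1), ((-1) ^ k * a.choose k * k.choose b : ℤ) =
      if a = b then (-1) ^ b else 0 := by
  rcases lt_or_ge a b with hab | hba
  · rw [if_neg hab.ne]
    refine sum_eq_zero fun k hk => ?_
    rw [Nat.choose_eq_zero_of_lt ((Nat.lt_succ_iff.mp (mem_range.mp hk)).trans_lt hab)]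
    simp
  have below_b : ∑ k ∈ Finset.range b, ((-1) ^ k * a.choose k * k.choose b : ℤ) = 0 :=
    sum_eq_zero fun k hk => by simp [Nat.choose_eq_zero_of_lt (mem_range.mp hk)]
  have shifted (i : ℕ) : ((-1) ^ (b + i) * a.choose (b + i) * (b + i).choose b : ℤ) =
      (-1) ^ b * a.choose b * ((-1) ^ i * (a - b).choose i) := by
    have h := Nat.choose_mul (n := a) (k := b + i) (le_add_right le_rfl)
    rw [Nat.add_sub_cancel_left] at h
    rw [pow_add, mul_assoc _ _ ((b + i).choose b : ℤ), ← Nat.cast_mul, h]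
    push_cast
    ring
  rw [Finset.range_eq_Ico, ← sum_Ico_consecutive _ (Nat.zero_le b) (by omega),
    ← Finset.range_eq_Ico, below_b, zero_add, sum_Ico_eq_sum_range,
    show a + 1 - b = a - b + 1 by omega]
  simp_rw [shifted, ← mul_sum, alternating_sum_range_choose, Nat.sub_eq_zero_iff_le]
  by_cases h : a = b
  · subst h
    simp
  · rw [if_neg (by omega), if_neg h, mul_zero]

theorem alternating_sum_range_choose_mul_choose_of_le {a N : ℕ} (b : ℕ) (h : a ≤ N) :
    ∑ k ∈ Finset.range (N + 1), ((-1) ^ k * a.choose k * k.choose b : ℤ) =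
      if a = b then (-1) ^ b else 0 := by
  rw [← alternating_sum_range_choose_mul_choose]
  refine (sum_subset (range_subset_range.mpr (by omega)) fun k _ hk => ?_).symm
  simp [Nat.choose_eq_zero_of_lt (not_lt.mp (mem_range.not.mp hk))]

end Int

/-- The matrix `Φ_n²(m,k) = C(n-m,k)/C(n,k)` has inverse with entries
`(-1)^{i+j-n} C(i,n-j) C(n,i)`:
`∑_{k=0}^{n} [C(n-m,k)/C(n,k)] (-1)^{k+j-n} C(k,n-j) C(n,k) = δ_{m,j}`. -/
theorem duality_kernel2_inverse (n m j : ℕ) (hm : m ≤ n) (hj : j ≤ n) :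
    ∑ k ∈ Finset.range (n + 1),
        (((n - m).choose k : ℝ) / (n.choose k : ℝ)) *
          ((-1 : ℝ) ^ (k + j + n) * (k.choose (n - j) : ℝ) * (n.choose k : ℝ)) =
      if m = j then 1 else 0 := by
  have sign : (-1 : ℝ) ^ (j + n) = (-1) ^ (n - j) := by
    rw [show j + n = n - j + 2 * j by omega, pow_add, pow_mul]
    norm_num
  have cancel_choose : ∀ k ∈ range (n + 1),
      (((n - m).choose k : ℝ) / (n.choose k : ℝ)) *
          ((-1 : ℝ) ^ (k + j + n) * (k.choose (n - j) : ℝ) * (n.choose k : ℝ)) =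
        (-1) ^ (n - j) * (((-1) ^ k * (n - m).choose k * k.choose (n - j) : ℤ) : ℝ) := by
    intro k hk
    have hnk : (n.choose k : ℝ) ≠ 0 :=
      Nat.cast_ne_zero.mpr (Nat.choose_pos (Nat.lt_succ_iff.mp (mem_range.mp hk))).ne'
    rw [add_assoc, pow_add, sign]
    push_cast
    field_simp
  rw [sum_congr rfl cancel_choose, ← mul_sum, ← Int.cast_sum,
    Int.alternating_sum_range_choose_mul_choose_of_le (n - j) (Nat.sub_le n m)]
  by_cases h : m = j
  · subst h
    push_cast
    rw [if_pos rfl, if_pos rfl, ← pow_add, ← two_mul, pow_mul]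
    norm_num
  · rw [if_neg (by omega), if_neg h, Int.cast_zero, mul_zero]
end

section
/- Let p : [0,1] → [0,1] with q = 1 - p completely monotone, and let Π_n(k,k') = C(n,k') p(k/n)^{k'} (1-p(k/n))^{n-k'} be the biased Wright-Fisher forward transition matrix, and P_n(i,j) = C(n,j) ∑_{l=0}^{j} (-1)^{j-l} C(j,l) q(1-l/n)^i. Then the one-step duality identity Π_n Φ_n = Φ_n P_n' holds, where Φ_n(m,k) = C(n-m,k)/C(n,k). -/
/-!
Both sides equal `q(k/n)^m`. Row `k` of `Π_n` is the binomial law `Bin(n, p(k/n))`, and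
`C(n,k') C(n-k',m) = C(n,m) C(n-m,k')` turns the expectation of `Φ_n(·, m)` under it into
`(1-x)^m (x + (1-x))^(n-m)` with `x = p(k/n)`. On the other side the factors `C(n,j)`
cancel, leaving Newton's forward-difference series of `l ↦ q(1 - l/n)^m` at `n - k`, which
returns its value `q(1 - (n-k)/n)^m = q(k/n)^m`.
-/

open Finset

theorem Nat.choose_mul_choose_sub_comm (n k m : ℕ) :
    n.choose k * (n - k).choose m = n.choose m * (n - m).choose k := by
  have hk := Nat.choose_mul (n := n) (Nat.le_add_right k m)
  have hm := Nat.choose_mul (n := n) (Nat.le_add_left m k)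
  rw [Nat.add_sub_cancel_left] at hk
  rw [Nat.add_sub_cancel] at hm
  rw [← hk, ← hm, Nat.choose_symm_add]

theorem sum_choose_mul_choose_sub_mul_pow_mul_pow {R : Type*} [CommSemiring R] (x y : R)
    {n m : ℕ} (hm : m ≤ n) :
    ∑ k ∈ range (n + 1), ((n.choose k * (n - k).choose m : ℕ) : R) * (x ^ k * y ^ (n - k)) =
      n.choose m * y ^ m * (x + y) ^ (n - m) := by
  have hsub : range (n - m + 1) ⊆ range (n + 1) := range_subset_range.mpr (by omega)
  rw [add_pow, mul_sum, ← sum_subset hsub]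
  · refine sum_congr rfl fun k hk => ?_
    rw [mem_range] at hk
    rw [Nat.choose_mul_choose_sub_comm, show n - k = n - m - k + m by omega, pow_add]
    push_cast
    ring
  · intro k _ hk
    rw [mem_range, not_lt] at hk
    rw [Nat.choose_mul_choose_sub_comm, Nat.choose_eq_zero_of_lt (by omega : n - m < k)]
    simp

theorem sum_choose_mul_sum_alternating_choose {R : Type*} [CommRing R] (f : ℕ → R) {N n : ℕ}
    (hN : N ≤ n) :
    ∑ j ∈ range (n + 1), (N.choose j : R) *
        ∑ l ∈ range (j + 1), (-1) ^ (j - l) * (j.choose l : R) * f l = f N := by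
  have newton := shift_eq_sum_fwdDiff_iter 1 f N 0
  simp only [fwdDiff_iter_eq_sum_shift, zero_add, smul_eq_mul, nsmul_eq_mul, mul_one,
    zsmul_eq_mul] at newton
  push_cast at newton
  rw [newton, ← sum_subset (range_subset_range.mpr (by omega : N + 1 ≤ n + 1))]
  intro j _ hj
  rw [mem_range, not_lt] at hj
  rw [Nat.choose_eq_zero_of_lt (by omega : N < j), Nat.cast_zero, zero_mul]

theorem wright_fisher_duality_general (n : ℕ) (hn : 1 ≤ n) (p : ℝ → ℝ)
    (Pi P Φ : ℕ → ℕ → ℝ)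
    (hPi : ∀ k k', Pi k k' = (n.choose k' : ℝ) *
        p ((k : ℝ) / n) ^ k' * (1 - p ((k : ℝ) / n)) ^ (n - k'))
    (hP : ∀ i j, P i j = (n.choose j : ℝ) * ∑ l ∈ Finset.range (j + 1),
        (-1 : ℝ) ^ (j - l) * (j.choose l : ℝ) * (1 - p (1 - (l : ℝ) / n)) ^ i)
    (hΦ : ∀ m k, Φ m k = ((n - m).choose k : ℝ) / (n.choose k : ℝ)) :
    ∀ k m, k ≤ n → m ≤ n →
      ∑ k' ∈ Finset.range (n + 1), Pi k k' * Φ k' m =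
        ∑ j ∈ Finset.range (n + 1), Φ k j * P m j := by
  intro k m hk hm
  set x := p ((k : ℝ) / n)
  have forward : ∑ k' ∈ range (n + 1), Pi k k' * Φ k' m = (1 - x) ^ m := by
    have hCm : (n.choose m : ℝ) ≠ 0 := Nat.cast_ne_zero.mpr (Nat.choose_pos hm).ne'
    calc ∑ k' ∈ range (n + 1), Pi k k' * Φ k' m
        = (∑ k' ∈ range (n + 1), ((n.choose k' * (n - k').choose m : ℕ) : ℝ) *
            (x ^ k' * (1 - x) ^ (n - k'))) / n.choose m := by
          rw [sum_div]
          refine sum_congr rfl fun k' _ => ?_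
          rw [hPi, hΦ]
          push_cast
          ring
      _ = (1 - x) ^ m := by
          rw [sum_choose_mul_choose_sub_mul_pow_mul_pow _ _ hm, add_sub_cancel, one_pow, mul_one,
            mul_div_cancel_left₀ _ hCm]
  have backward : ∑ j ∈ range (n + 1), Φ k j * P m j =
      (1 - p (1 - ((n - k : ℕ) : ℝ) / n)) ^ m := by
    rw [← sum_choose_mul_sum_alternating_choose (fun l => (1 - p (1 - (l : ℝ) / n)) ^ m)
      (Nat.sub_le n k)]
    refine sum_congr rfl fun j hj => ?_
    have hCj : (n.choose j : ℝ) ≠ 0 :=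
      Nat.cast_ne_zero.mpr (Nat.choose_pos (Nat.lt_succ_iff.mp (mem_range.mp hj))).ne'
    rw [hΦ, hP, ← mul_assoc, div_mul_cancel₀ _ hCj]
  have hreflect : 1 - ((n - k : ℕ) : ℝ) / n = k / n := by
    have : (n : ℝ) ≠ 0 := Nat.cast_ne_zero.mpr (by omega)
    rw [Nat.cast_sub hk]
    field_simp
    ring
  rw [forward, backward, hreflect]

/-- One-step duality identity `Pi_n Φ_n = Φ_n P_n'` for the biased Wright-Fisher model:
with `q = 1 - p` completely monotone on `(0,1)`,
`Pi_n(k,k') = C(n,k') p(k/n)^{k'} (1-p(k/n))^{n-k'}`,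
`P_n(i,j) = C(n,j) ∑_{l≤j} (-1)^{j-l} C(j,l) q(1-l/n)^i` and
`Φ_n(m,k) = C(n-m,k)/C(n,k)`, the `(k,m)` entry of `Pi_n Φ_n` equals the
`(k,m)` entry of `Φ_n P_n'`. -/
theorem wright_fisher_duality (n : ℕ) (hn : 1 ≤ n) (p : ℝ → ℝ)
    (hp : ∀ x ∈ Set.Icc (0 : ℝ) 1, p x ∈ Set.Icc (0 : ℝ) 1)
    (hq : ∀ (l : ℕ) (x : ℝ), x ∈ Set.Ioo (0 : ℝ) 1 →
      0 ≤ (-1 : ℝ) ^ l * iteratedDeriv l (fun y => 1 - p y) x)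
    (Pi P Φ : ℕ → ℕ → ℝ)
    (hPi : ∀ k k', Pi k k' = (n.choose k' : ℝ) *
        p ((k : ℝ) / n) ^ k' * (1 - p ((k : ℝ) / n)) ^ (n - k'))
    (hP : ∀ i j, P i j = (n.choose j : ℝ) * ∑ l ∈ Finset.range (j + 1),
        (-1 : ℝ) ^ (j - l) * (j.choose l : ℝ) * (1 - p (1 - (l : ℝ) / n)) ^ i)
    (hΦ : ∀ m k, Φ m k = ((n - m).choose k : ℝ) / (n.choose k : ℝ)) :
    ∀ k m, k ≤ n → m ≤ n →
      ∑ k' ∈ Finset.range (n + 1), Pi k k' * Φ k' m =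
        ∑ j ∈ Finset.range (n + 1), Φ k j * P m j :=
  wright_fisher_duality_general n hn p Pi P Φ hPi hP hΦ
end

section
/- For the affine mutation bias p(x) = (1-μ₂)x + μ₁(1-x) with κ = 1-(μ₁+μ₂) ≥ 0, the backward matrix P_n(i,j) = C(n,j) ∑_{l=0}^{j} (-1)^{j-l} C(j,l) (μ₂ + κ l/n)^i is lower triangular (P_n(i,j) = 0 for j > i) with diagonal entries P_n(i,i) = (n)_i (κ/n)^i, and its row sums equal (1-μ₁)^i. -/
/-! The inner sum `∑ₗ (-1)^(j-l) C(j,l) f(l)` is the `j`-th forward difference `Δʲf(0)` of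
`f(x) = (μ₂ + κx/n)^i`, so `P_n(i,j) = C(n,j) Δʲf(0)`. Since `f` is a polynomial of degree at
most `i` with `xⁱ`-coefficient `(κ/n)^i`, its `i`-th difference is the constant `i! (κ/n)^i` and
all higher differences vanish; and by the Gregory–Newton formula the row sum `∑ⱼ C(n,j) Δʲf(0)`
is `f(n) = (μ₂ + κ)^i = (1 - μ₁)^i`. -/

open Finset
open scoped fwdDiff Nat

section AffinePow

variable {R : Type*} [CommRing R]

theorem fwdDiff_iter_affine_pow_self (a c : R) (i : ℕ) :
    (Δ_[1])^[i] (fun r : R ↦ (a + c * r) ^ i) = fun _ ↦ c ^ i * i ! := by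
  have hexpand : (fun r : R ↦ (a + c * r) ^ i) = c ^ i • (fun r : R ↦ r ^ i) +
      fun r ↦ ∑ m ∈ range i, (a ^ (i - m) * i.choose m * c ^ m) * r ^ m := by
    funext r
    rw [add_comm a, add_pow, sum_range_succ, add_comm, Pi.add_apply]
    simp only [Nat.sub_self, pow_zero, Nat.choose_self, Nat.cast_one, mul_one, mul_pow,
      Pi.smul_apply, smul_eq_mul]
    congr 1
    exact sum_congr rfl fun m _ ↦ by ring
  rw [hexpand, fwdDiff_iter_add, fwdDiff_iter_const_smul, fwdDiff_iter_eq_factorial,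
    fwdDiff_iter_sum_mul_pow_eq_zero, add_zero]
  rfl

theorem fwdDiff_iter_affine_pow_of_lt (a c : R) {i j : ℕ} (hij : i < j) :
    (Δ_[1])^[j] (fun r : R ↦ (a + c * r) ^ i) = 0 := by
  obtain ⟨k, rfl⟩ := Nat.exists_eq_add_of_lt hij
  rw [add_assoc, add_comm, Function.iterate_add_apply, fwdDiff_iter_affine_pow_self,
    Function.iterate_succ_apply, fwdDiff_const]
  exact Function.iterate_fixed (fwdDiff_const 1 0) k

end AffinePow

section Ring

variable {R : Type*} [Ring R]

theorem fwdDiff_iter_apply_zero_eq_sum (f : R → R) (j : ℕ) :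
    (Δ_[1])^[j] f 0 = ∑ l ∈ range (j + 1), (-1 : R) ^ (j - l) * j.choose l * f l := by
  simp [fwdDiff_iter_eq_sum_shift]

theorem sum_choose_mul_fwdDiff_iter_apply_zero (f : R → R) (n : ℕ) :
    ∑ j ∈ range (n + 1), (n.choose j : R) * (Δ_[1])^[j] f 0 = f n := by
  simpa [nsmul_eq_mul] using (shift_eq_sum_fwdDiff_iter 1 f n 0).symm

end Ring

theorem mutation_backward_matrix_general (μ₁ μ₂ : ℝ)
    (n : ℕ) (hn : 1 ≤ n) (i : ℕ) :
    (∀ j, i < j →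
      (n.choose j : ℝ) * ∑ l ∈ Finset.range (j + 1),
          (-1 : ℝ) ^ (j - l) * (j.choose l : ℝ) *
            (μ₂ + (1 - (μ₁ + μ₂)) * l / n) ^ i = 0) ∧
    ((n.choose i : ℝ) * ∑ l ∈ Finset.range (i + 1),
        (-1 : ℝ) ^ (i - l) * (i.choose l : ℝ) *
          (μ₂ + (1 - (μ₁ + μ₂)) * l / n) ^ i =
      (n.descFactorial i : ℝ) * ((1 - (μ₁ + μ₂)) / n) ^ i) ∧
    (∑ j ∈ Finset.range (n + 1),
        (n.choose j : ℝ) * ∑ l ∈ Finset.range (j + 1),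
          (-1 : ℝ) ^ (j - l) * (j.choose l : ℝ) *
            (μ₂ + (1 - (μ₁ + μ₂)) * l / n) ^ i =
      (1 - μ₁) ^ i) := by
  have hentry : ∀ j, ∑ l ∈ range (j + 1), (-1 : ℝ) ^ (j - l) * (j.choose l : ℝ) *
      (μ₂ + (1 - (μ₁ + μ₂)) * l / n) ^ i =
      (Δ_[1])^[j] (fun r : ℝ ↦ (μ₂ + (1 - (μ₁ + μ₂)) / n * r) ^ i) 0 := fun j ↦ by
    simp only [fwdDiff_iter_apply_zero_eq_sum, mul_div_right_comm]
  simp only [hentry]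
  refine ⟨fun j hij ↦ ?_, ?_, ?_⟩
  · rw [fwdDiff_iter_affine_pow_of_lt _ _ hij, Pi.zero_apply, mul_zero]
  · rw [fwdDiff_iter_affine_pow_self, Nat.descFactorial_eq_factorial_mul_choose]
    push_cast
    ring
  · have hn0 : (n : ℝ) ≠ 0 := Nat.cast_ne_zero.mpr (by omega)
    rw [sum_choose_mul_fwdDiff_iter_apply_zero]
    field_simp
    ring

/-- For the affine mutation bias with `κ = 1-(μ₁+μ₂) ≥ 0`, the backward matrix
`P_n(i,j) = C(n,j) ∑_{l=0}^{j} (-1)^{j-l} C(j,l) (μ₂ + κ l/n)^i` is lower triangular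
(`P_n(i,j) = 0` for `j > i`), has diagonal entries `P_n(i,i) = (n)_i (κ/n)^i`, and its
row sums equal `(1-μ₁)^i`. -/
theorem mutation_backward_matrix (μ₁ μ₂ : ℝ) (h1 : μ₁ ∈ Set.Icc (0 : ℝ) 1)
    (h2 : μ₂ ∈ Set.Icc (0 : ℝ) 1) (hκ : μ₁ + μ₂ ≤ 1)
    (n : ℕ) (hn : 1 ≤ n) (i : ℕ) (hi : i ≤ n) :
    (∀ j, i < j →
      (n.choose j : ℝ) * ∑ l ∈ Finset.range (j + 1),
          (-1 : ℝ) ^ (j - l) * (j.choose l : ℝ) *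
            (μ₂ + (1 - (μ₁ + μ₂)) * l / n) ^ i = 0) ∧
    ((n.choose i : ℝ) * ∑ l ∈ Finset.range (i + 1),
        (-1 : ℝ) ^ (i - l) * (i.choose l : ℝ) *
          (μ₂ + (1 - (μ₁ + μ₂)) * l / n) ^ i =
      (n.descFactorial i : ℝ) * ((1 - (μ₁ + μ₂)) / n) ^ i) ∧
    (∑ j ∈ Finset.range (n + 1),
        (n.choose j : ℝ) * ∑ l ∈ Finset.range (j + 1),
          (-1 : ℝ) ^ (j - l) * (j.choose l : ℝ) *
            (μ₂ + (1 - (μ₁ + μ₂)) * l / n) ^ i =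
      (1 - μ₁) ^ i) :=
  mutation_backward_matrix_general μ₁ μ₂ n hn i
end
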